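/- Consider the DAG D with one source s, internal vertices v₁,…,v_k, and sinks t₁,…,t_ℓ, whose edges are: (s, v_i) for every i ∈ {1,…,k}; (v_i, v_{i+1}) for every i ∈ {1,…,k−1}; (v₁, t₁); and (v_k, t_j) for every j ∈ {1,…,ℓ}. Then eliminating the internal vertices in forward topological order (v₁, v₂, …, v_k) incurs total cost k + ℓ, whereas eliminating them in reverse topological order (v_k, v_{k−1}, …, v₁) incurs total cost 2ℓ(k − 1) + ℓ. -/
import Mathlib


variable {V : Type*} [DecidableEq V] [Fintype V]

/-- In-neighborhood of `v` in the edge set `E`. -/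
def inN (E : Finset (V × V)) (v : V) : Finset V :=
  (E.filter fun p => p.2 = v).image Prod.fst

/-- Out-neighborhood of `v` in the edge set `E`. -/
def outN (E : Finset (V × V)) (v : V) : Finset V :=
  (E.filter fun p => p.1 = v).image Prod.snd

/-- Elimination of vertex `v`: delete `v` and add an edge from every in-neighbor
to every out-neighbor of `v` (if not already present). -/
def elimv (E : Finset (V × V)) (v : V) : Finset (V × V) :=
  (E ∪ (inN E v) ×ˢ (outN E v)).filter fun p => p.1 ≠ v ∧ p.2 ≠ v

/-- Eliminate a sequence of vertices, in order. -/
def elimSeq (E : Finset (V × V)) (σ : List V) : Finset (V × V) :=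
  σ.foldl elimv E

/-- Markowitz degree of `v`: in-degree times out-degree. -/
def mark (E : Finset (V × V)) (v : V) : ℕ :=
  (inN E v).card * (outN E v).card

/-- Cost of an elimination sequence: sum of the Markowitz degrees at the
time of each elimination. -/
def cost (E : Finset (V × V)) : List V → ℕ
  | [] => 0
  | v :: σ => mark E v + cost (elimv E v) σ

/-- The directed graph with edge set `E` is acyclic. -/
def Acyclic (E : Finset (V × V)) : Prop :=
  ∀ v : V, ¬ Relation.TransGen (fun a b => (a, b) ∈ E) v v

/-- `E` is an acyclic digraph whose vertices are partitioned into sources `S`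
(no in-edges), internal vertices `I`, and sinks `T` (no out-edges). -/
def IsDAGPartition (E : Finset (V × V)) (S I T : Finset V) : Prop :=
  Acyclic E ∧ Disjoint S I ∧ Disjoint S T ∧ Disjoint I T ∧
    S ∪ I ∪ T = Finset.univ ∧ (∀ s ∈ S, inN E s = ∅) ∧ (∀ t ∈ T, outN E t = ∅)

/-- There is a directed path from `i` to `j` all of whose internal vertices
lie in `X` (the single-edge path has no internal vertices). -/
def PathThrough (E : Finset (V × V)) (X : Finset V) (i j : V) : Prop :=
  ∃ l : List V, (∀ v ∈ l, v ∈ X) ∧ List.Chain' (fun a b => (a, b) ∈ E) (i :: (l ++ [j]))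

/-- Vertex type: one source, `k` internal vertices, `ℓ` sinks. -/
abbrev Vtx (k l : ℕ) := Unit ⊕ Fin k ⊕ Fin l

/-- Edges: `s → vᵢ` for all `i`; `vᵢ → vᵢ₊₁`; `v₁ → t₁`; `v_k → t_j` for all `j`. -/
def edgeB (k l : ℕ) : Vtx k l → Vtx k l → Bool
  | Sum.inl _, Sum.inr (Sum.inl _) => true
  | Sum.inr (Sum.inl i), Sum.inr (Sum.inl j) => j.val == i.val + 1
  | Sum.inr (Sum.inl i), Sum.inr (Sum.inr j) =>
      (i.val == 0 && j.val == 0) || (i.val == k - 1)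
  | _, _ => false

/-- Edge set of the tightness construction. -/
def Ed (k l : ℕ) : Finset (Vtx k l × Vtx k l) :=
  Finset.univ.filter (fun p => edgeB k l p.1 p.2 = true)

/-- The internal vertices in forward topological order `v₁, …, v_k`. -/
def fwdList (k l : ℕ) : List (Vtx k l) :=
  (List.finRange k).map (fun i => Sum.inr (Sum.inl i))

lemma mem_inN {E : Finset (V × V)} {v x : V} : x ∈ inN E v ↔ (x, v) ∈ E := by
  simp [inN]
lemma mem_outN {E : Finset (V × V)} {v x : V} : x ∈ outN E v ↔ (v, x) ∈ E := by
  simp [outN]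
lemma mem_elimv {E : Finset (V × V)} {v a b : V} :
    (a, b) ∈ elimv E v ↔ (((a,b) ∈ E ∨ ((a,v) ∈ E ∧ (v,b) ∈ E)) ∧ a ≠ v ∧ b ≠ v) := by
  simp [elimv, mem_inN, mem_outN]

/-- Edge state after forward elimination of `v_0, …, v_{m-1}`, for `1 ≤ m ≤ k`. -/
def fE (k l m : ℕ) : Vtx k l → Vtx k l → Bool
  | Sum.inl _, Sum.inr (Sum.inl i) => decide (m ≤ i.val)
  | Sum.inr (Sum.inl i), Sum.inr (Sum.inl j) => (j.val == i.val + 1) && decide (m ≤ i.val)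
  | Sum.inr (Sum.inl i), Sum.inr (Sum.inr _) => (i.val == k - 1) && decide (m ≤ i.val)
  | Sum.inl _, Sum.inr (Sum.inr j) => (j.val == 0) || (m == k)
  | _, _ => false
def fEd (k l m : ℕ) : Finset (Vtx k l × Vtx k l) :=
  Finset.univ.filter (fun p => fE k l m p.1 p.2 = true)

/-- Edge state after reverse elimination of `v_{k-1}, …, v_r`, for `0 ≤ r ≤ k-1`. -/
def rE (k l r : ℕ) : Vtx k l → Vtx k l → Bool
  | Sum.inl _, Sum.inr (Sum.inl i) => decide (i.val < r)
  | Sum.inr (Sum.inl i), Sum.inr (Sum.inl j) => (j.val == i.val + 1) && decide (j.val < r)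
  | Sum.inr (Sum.inl i), Sum.inr (Sum.inr j) =>
      decide (0 < r) && ((i.val + 1 == r) || (i.val == 0 && j.val == 0))
  | Sum.inl _, Sum.inr (Sum.inr _) => true
  | _, _ => false
def rEd (k l r : ℕ) : Finset (Vtx k l × Vtx k l) :=
  Finset.univ.filter (fun p => rE k l r p.1 p.2 = true)

lemma mem_Ed {k l : ℕ} {a b : Vtx k l} : (a, b) ∈ Ed k l ↔ edgeB k l a b = true := by
  simp [Ed]
lemma mem_fEd {k l m : ℕ} {a b : Vtx k l} : (a, b) ∈ fEd k l m ↔ fE k l m a b = true := by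
  simp [fEd]
lemma mem_rEd {k l r : ℕ} {a b : Vtx k l} : (a, b) ∈ rEd k l r ↔ rE k l r a b = true := by
  simp [rEd]

lemma fstep0 {k l : ℕ} (hk : 2 ≤ k) :
    elimv (Ed k l) (Sum.inr (Sum.inl ⟨0, by omega⟩)) = fEd k l 1 := by
  ext ⟨a, b⟩
  rw [mem_elimv, mem_fEd]
  rcases a with _ | i | i <;> rcases b with _ | j | j <;>
    simp [mem_Ed, edgeB, fE, Fin.ext_iff] <;> omega

lemma fstep {k l m : ℕ} (h1 : 1 ≤ m) (h2 : m < k) :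
    elimv (fEd k l m) (Sum.inr (Sum.inl ⟨m, h2⟩)) = fEd k l (m + 1) := by
  ext ⟨a, b⟩
  rw [mem_elimv, mem_fEd]
  rcases a with _ | i | i <;> rcases b with _ | j | j <;>
    simp [mem_fEd, fE, Fin.ext_iff] <;>
    first
      | omega
      | (have := i.isLt; omega)
      | (have := j.isLt; omega)
      | (have := i.isLt; have := j.isLt; omega)

lemma rstep0 {k l : ℕ} (hk : 2 ≤ k) :
    elimv (Ed k l) (Sum.inr (Sum.inl ⟨k - 1, by omega⟩)) = rEd k l (k - 1) := by
  ext ⟨a, b⟩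
  rw [mem_elimv, mem_rEd]
  rcases a with _ | i | i <;> rcases b with _ | j | j <;>
    simp [mem_Ed, edgeB, rE, Fin.ext_iff] <;>
    first
      | omega
      | (have := i.isLt; omega)
      | (have := j.isLt; omega)
      | (have := i.isLt; have := j.isLt; omega)

lemma rstep {k l r : ℕ} (h1 : 1 ≤ r) (h2 : r - 1 < k) :
    elimv (rEd k l r) (Sum.inr (Sum.inl ⟨r - 1, h2⟩)) = rEd k l (r - 1) := by
  ext ⟨a, b⟩
  rw [mem_elimv, mem_rEd]
  rcases a with _ | i | i <;> rcases b with _ | j | j <;>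
    simp [mem_rEd, rE, Fin.ext_iff] <;>
    first
      | omega
      | (have := i.isLt; omega)
      | (have := j.isLt; omega)
      | (have := i.isLt; have := j.isLt; omega)

def tS (k l : ℕ) : Finset (Vtx k l) := Finset.univ.image (fun j : Fin l => Sum.inr (Sum.inr j))

lemma card_tS (k l : ℕ) : (tS k l).card = l := by
  rw [tS, Finset.card_image_of_injective _ (by intro a b h; simpa using h)]
  simp

lemma mark_fwd0 {k l : ℕ} (hk : 2 ≤ k) (hl : 1 ≤ l) :
    mark (Ed k l) (Sum.inr (Sum.inl ⟨0, by omega⟩)) = 2 := by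
  have h1 : inN (Ed k l) (Sum.inr (Sum.inl ⟨0, by omega⟩)) = {Sum.inl ()} := by
    ext x
    rcases x with _ | i | i <;> simp [mem_inN, mem_Ed, edgeB, Fin.ext_iff]
  have h2 : outN (Ed k l) (Sum.inr (Sum.inl ⟨0, by omega⟩)) =
      {Sum.inr (Sum.inl ⟨1, by omega⟩), Sum.inr (Sum.inr ⟨0, by omega⟩)} := by
    ext x
    rcases x with _ | i | i <;> simp [mem_outN, mem_Ed, edgeB, Fin.ext_iff] <;> omega
  rw [mark, h1, h2]
  simp

lemma mark_fwd_mid {k l m : ℕ} (h1 : 1 ≤ m) (h2 : m + 1 < k) :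
    mark (fEd k l m) (Sum.inr (Sum.inl ⟨m, by omega⟩)) = 1 := by
  have ha : inN (fEd k l m) (Sum.inr (Sum.inl ⟨m, by omega⟩)) = {Sum.inl ()} := by
    ext x
    rcases x with _ | i | i <;> simp [mem_inN, mem_fEd, fE, Fin.ext_iff] <;> omega
  have hb : outN (fEd k l m) (Sum.inr (Sum.inl ⟨m, by omega⟩)) =
      {Sum.inr (Sum.inl ⟨m + 1, h2⟩)} := by
    ext x
    rcases x with _ | i | i <;> simp [mem_outN, mem_fEd, fE, Fin.ext_iff] <;> omega
  rw [mark, ha, hb]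
  simp

lemma mark_fwd_last {k l : ℕ} (hk : 2 ≤ k) :
    mark (fEd k l (k - 1)) (Sum.inr (Sum.inl ⟨k - 1, by omega⟩)) = l := by
  have ha : inN (fEd k l (k - 1)) (Sum.inr (Sum.inl ⟨k - 1, by omega⟩)) = {Sum.inl ()} := by
    ext x
    rcases x with _ | i | i <;> simp [mem_inN, mem_fEd, fE, Fin.ext_iff] <;> omega
  have hb : outN (fEd k l (k - 1)) (Sum.inr (Sum.inl ⟨k - 1, by omega⟩)) = tS k l := by
    ext x
    rcases x with _ | i | i <;> simp [mem_outN, mem_fEd, fE, Fin.ext_iff, tS] <;> omega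
  rw [mark, ha, hb, card_tS]
  simp

lemma mark_rev0 {k l : ℕ} (hk : 2 ≤ k) :
    mark (Ed k l) (Sum.inr (Sum.inl ⟨k - 1, by omega⟩)) = 2 * l := by
  have ha : inN (Ed k l) (Sum.inr (Sum.inl ⟨k - 1, by omega⟩)) =
      {Sum.inl (), Sum.inr (Sum.inl ⟨k - 2, by omega⟩)} := by
    ext x
    rcases x with _ | i | i <;> simp [mem_inN, mem_Ed, edgeB, Fin.ext_iff] <;> omega
  have hb : outN (Ed k l) (Sum.inr (Sum.inl ⟨k - 1, by omega⟩)) = tS k l := by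
    ext x
    rcases x with _ | i | i <;> simp [mem_outN, mem_Ed, edgeB, Fin.ext_iff, tS] <;> omega
  rw [mark, ha, hb, card_tS, Finset.card_insert_of_notMem (by simp), Finset.card_singleton]

lemma mark_rev_mid {k l r : ℕ} (h1 : 2 ≤ r) (h2 : r ≤ k - 1) (hk : 2 ≤ k) :
    mark (rEd k l r) (Sum.inr (Sum.inl ⟨r - 1, by omega⟩)) = 2 * l := by
  have ha : inN (rEd k l r) (Sum.inr (Sum.inl ⟨r - 1, by omega⟩)) =
      {Sum.inl (), Sum.inr (Sum.inl ⟨r - 2, by omega⟩)} := by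
    ext x
    rcases x with _ | i | i <;> simp [mem_inN, mem_rEd, rE, Fin.ext_iff] <;> omega
  have hb : outN (rEd k l r) (Sum.inr (Sum.inl ⟨r - 1, by omega⟩)) = tS k l := by
    ext x
    rcases x with _ | i | i <;> simp [mem_outN, mem_rEd, rE, Fin.ext_iff, tS] <;> omega
  rw [mark, ha, hb, card_tS, Finset.card_insert_of_notMem (by simp), Finset.card_singleton]

lemma mark_rev_last {k l : ℕ} (hk : 2 ≤ k) :
    mark (rEd k l 1) (Sum.inr (Sum.inl ⟨0, by omega⟩)) = l := by
  have ha : inN (rEd k l 1) (Sum.inr (Sum.inl ⟨0, by omega⟩)) = {Sum.inl ()} := by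
    ext x
    rcases x with _ | i | i <;> simp [mem_inN, mem_rEd, rE, Fin.ext_iff] <;> omega
  have hb : outN (rEd k l 1) (Sum.inr (Sum.inl ⟨0, by omega⟩)) = tS k l := by
    ext x
    rcases x with _ | i | i <;> simp [mem_outN, mem_rEd, rE, Fin.ext_iff, tS] <;> omega
  rw [mark, ha, hb, card_tS]
  simp

def vOf (k l n : ℕ) : Vtx k l := if h : n < k then Sum.inr (Sum.inl ⟨n, h⟩) else Sum.inl ()

lemma fwdList_eq (k l : ℕ) : fwdList k l = (List.range k).map (vOf k l) := by
  apply List.ext_getElem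
  · simp [fwdList]
  · intro n h1 h2
    simp [fwdList, vOf] at h1 ⊢
    simp [h1]

lemma fwd_cost (k l : ℕ) : ∀ b m, 1 ≤ b → 1 ≤ m → m + b = k →
    cost (fEd k l m) ((List.range' m b).map (vOf k l)) = (b - 1) + l := by
  intro b
  induction b with
  | zero => omega
  | succ b ih =>
    intro m _ h1 h2
    rw [List.range'_succ, List.map_cons, cost]
    have hmk : m < k := by omega
    have hv : vOf k l m = Sum.inr (Sum.inl ⟨m, hmk⟩) := by simp [vOf, hmk]
    rw [hv, fstep h1 hmk]
    rcases Nat.eq_or_lt_of_le (Nat.succ_le_of_lt hmk) with he | hlt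
    · -- m + 1 = k, so b = 0
      have hb : b = 0 := by omega
      subst hb
      have : m = k - 1 := by omega
      subst this
      rw [mark_fwd_last (by omega)]
      simp [cost]
    · rw [mark_fwd_mid h1 (by omega), ih (m+1) (by omega) (by omega) (by omega)]
      omega

def rList (k l r : ℕ) : List (Vtx k l) := ((List.range r).reverse).map (vOf k l)

lemma rList_succ (k l r : ℕ) : rList k l (r + 1) = vOf k l r :: rList k l r := by
  simp [rList, List.range_succ]

lemma rev_cost (k l : ℕ) (hk : 2 ≤ k) : ∀ r, 1 ≤ r → r ≤ k - 1 →
    cost (rEd k l r) (rList k l r) = 2 * l * (r - 1) + l := by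
  intro r
  induction r with
  | zero => omega
  | succ r ih =>
    intro _ h2
    rw [rList_succ]
    have hr : r < k := by omega
    have hv : vOf k l r = Sum.inr (Sum.inl ⟨r, hr⟩) := by simp [vOf, hr]
    rw [cost, hv]
    have hstep := rstep (k := k) (l := l) (r := r + 1) (by omega) (by simpa using hr)
    simp only [Nat.add_sub_cancel] at hstep
    rw [hstep]
    rcases Nat.eq_zero_or_pos r with h0 | hpos
    · subst h0
      rw [mark_rev_last hk]
      simp [rList, cost]
    · have hm := mark_rev_mid (k := k) (l := l) (r := r + 1) (by omega) h2 hk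
      simp only [Nat.add_sub_cancel] at hm
      rw [hm, ih (by omega) (by omega)]
      obtain ⟨m, rfl⟩ : ∃ m, r = m + 1 := ⟨r - 1, by omega⟩
      simp only [Nat.add_sub_cancel]
      ring


/-- in the construction, forward elimination costs `k + ℓ` while
reverse elimination costs `2ℓ(k−1) + ℓ`. -/
theorem tightness_construction_costs (k l : ℕ) (hk : 2 ≤ k) (hl : 1 ≤ l) :
    cost (Ed k l) (fwdList k l) = k + l ∧
    cost (Ed k l) (fwdList k l).reverse = 2 * l * (k - 1) + l := by
  constructor
  · -- forward
    rw [fwdList_eq]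
    have hr : List.range k = 0 :: List.range' 1 (k - 1) := by
      conv_lhs => rw [List.range_eq_range', show k = k - 1 + 1 from by omega, List.range'_succ]
    rw [hr, List.map_cons, cost]
    have h0 : 0 < k := by omega
    have hv : vOf k l 0 = Sum.inr (Sum.inl ⟨0, h0⟩) := by simp [vOf, h0]
    rw [hv, fstep0 hk, mark_fwd0 hk hl, fwd_cost k l (k - 1) 1 (by omega) (by omega) (by omega)]
    omega
  · -- reverse
    have h1 : (fwdList k l).reverse = rList k l k := by
      rw [fwdList_eq, rList, List.map_reverse]
    rw [h1]
    obtain ⟨m, rfl⟩ : ∃ m, k = m + 1 := ⟨k - 1, by omega⟩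
    rw [rList_succ, cost]
    have hmlt : m < m + 1 := by omega
    have hv : vOf (m + 1) l m = Sum.inr (Sum.inl ⟨m, hmlt⟩) := by simp [vOf, hmlt]
    rw [hv]
    have hstep := rstep0 (k := m + 1) (l := l) hk
    simp only [Nat.add_sub_cancel] at hstep
    rw [hstep]
    have hmark := mark_rev0 (k := m + 1) (l := l) hk
    simp only [Nat.add_sub_cancel] at hmark
    rw [hmark]
    rw [rev_cost (m + 1) l hk m (by omega) (by omega)]
    obtain ⟨n, rfl⟩ : ∃ n, m = n + 1 := ⟨m - 1, by omega⟩
    simp only [Nat.add_sub_cancel]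
    ring
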